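/- With the monomial order of Guo–Sit–Zhang on 𝔐(X) and S = { (⌊⌊w⌋⌋, w), (⌊uv⌋, ⌊v⌋⌊u⌋), (⌊w⌋w, 1), (w⌊w⌋, 1) : w ∈ 𝔐(X), u,v ∈ 𝔐(X)\{1} }, the term-rewriting system Π_S is convergent, and Irr(S) = 𝔐(X) \ Dom(Π_S) is a section of the free group 𝔐(X)/⟨S⟩. -/

import Mathlib

namespace OpMon

/-- Letters of bracketed words: either a variable or a bracketed word. -/
inductive Letter (X : Type) : Type
  | of : X → Letter X
  | br : List (Letter X) → Letter X

/-- The free operated monoid `𝔐(X)`, modeled as lists of letters (free monoid on letters). -/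
abbrev M (X : Type) := List (Letter X)

/-- The operator `⌊ ⌋` on `𝔐(X)`. -/
def L {X : Type} (w : M X) : M X := [Letter.br w]

mutual
  /-- Substitute each variable by a word (letter version). -/
  def bindL {Y Z : Type} : Letter Y → (Y → M Z) → M Z
    | .of y, f => f y
    | .br w, f => [.br (bindW w f)]
  /-- Substitute each variable by a word (word version). -/
  def bindW {Y Z : Type} : M Y → (Y → M Z) → M Z
    | [], _ => []
    | a :: as, f => bindL a f ++ bindW as f
end

mutual
  /-- Count occurrences of variables satisfying `p` (letter version). -/
  def cntL {Y : Type} (p : Y → Bool) : Letter Y → ℕ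
    | .of y => if p y then 1 else 0
    | .br w => cntW p w
  /-- Count occurrences of variables satisfying `p` (word version). -/
  def cntW {Y : Type} (p : Y → Bool) : M Y → ℕ
    | [] => 0
    | a :: as => cntL p a + cntW p as
end

/-- The star letter `⋆`, modeled as `none`. -/
def starW {X : Type} : M (Option X) := [Letter.of none]

/-- `q` is a `⋆`-bracketed word: exactly one occurrence of `⋆`. -/
def IsStar {X : Type} (q : M (Option X)) : Prop :=
  cntW (fun o => o.isNone) q = 1

/-- Substitution `q|_u` of `u` for `⋆`. -/
def sub {X : Type} (q : M (Option X)) (u : M X) : M X :=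
  bindW q (fun o => Option.elim o u (fun x => [Letter.of x]))

/-- Embed `𝔐(X)` into `𝔐(X ∪ {⋆})`. -/
def emb {X : Type} (w : M X) : M (Option X) :=
  bindW w (fun x => [Letter.of (some x)])

/-- Substitute a `⋆`-word `r` for the `⋆` of `q`, yielding a word on `X ∪ {⋆}`. -/
def subS {X : Type} (q r : M (Option X)) : M (Option X) :=
  bindW q (fun o => Option.elim o r (fun x => [Letter.of (some x)]))

/-- `p` is a `(⋆₁,⋆₂)`-bracketed word (⋆₁ = `none`, ⋆₂ = `some none`). -/
def IsStar2 {X : Type} (p : M (Option (Option X))) : Prop :=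
  cntW (fun o => o.isNone) p = 1 ∧
  cntW (fun o => match o with | some none => true | _ => false) p = 1

/-- Substitution `p|_{u₁,u₂}`. -/
def sub2 {X : Type} (p : M (Option (Option X))) (u₁ u₂ : M X) : M X :=
  bindW p (fun o => match o with
    | none => u₁
    | some none => u₂
    | some (some x) => [Letter.of x])

/-- Substitution `p|_{u₁,⋆₂}`, a `⋆`-word. -/
def sub2L {X : Type} (p : M (Option (Option X))) (u₁ : M X) : M (Option X) :=
  bindW p (fun o => match o with
    | none => emb u₁
    | some none => [Letter.of none]
    | some (some x) => [Letter.of (some x)])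

/-- Substitution `p|_{⋆₁,u₂}`, a `⋆`-word. -/
def sub2R {X : Type} (p : M (Option (Option X))) (u₂ : M X) : M (Option X) :=
  bindW p (fun o => match o with
    | none => [Letter.of none]
    | some none => emb u₂
    | some (some x) => [Letter.of (some x)])

/-- `R^c`. -/
def Rc {X : Type} (R : Set (M X × M X)) : Set (M X × M X) :=
  {p | ∃ q a b, IsStar q ∧ (a, b) ∈ R ∧ p = (sub q a, sub q b)}

/-- Inverse relation `R⁻¹`. -/
def relInv {X : Type} (R : Set (M X × M X)) : Set (M X × M X) :=
  {p | (p.2, p.1) ∈ R}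

/-- Closure under right mult. (C1), left mult. (C2), and the operator (C3). -/
def Closed {X : Type} (S : Set (M X × M X)) : Prop :=
  ∀ a b, (a, b) ∈ S → ∀ c : M X,
    (a ++ c, b ++ c) ∈ S ∧ (c ++ a, c ++ b) ∈ S ∧ (L a, L b) ∈ S

/-- Composition of relations. -/
def relComp {X : Type} (R S : Set (M X × M X)) : Set (M X × M X) :=
  {p | ∃ c, (p.1, c) ∈ R ∧ (c, p.2) ∈ S}

/-- `relPow R n = R^(n+1)`. -/
def relPow {X : Type} (R : Set (M X × M X)) : ℕ → Set (M X × M X)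
  | 0 => R
  | n + 1 => relComp (relPow R n) R

/-- Operated congruence. -/
def IsOpCong {X : Type} (T : Set (M X × M X)) : Prop :=
  (∀ a, (a, a) ∈ T) ∧ (∀ a b, (a, b) ∈ T → (b, a) ∈ T) ∧
  (∀ a b c, (a, b) ∈ T → (b, c) ∈ T → (a, c) ∈ T) ∧ Closed T

/-- The operated congruence `⟨R⟩` generated by `R`. -/
def ocong {X : Type} (R : Set (M X × M X)) : Set (M X × M X) :=
  ⋂₀ {T | IsOpCong T ∧ R ⊆ T}

/-- Equivalence relation (as a set of pairs). -/
def IsEqv {X : Type} (T : Set (M X × M X)) : Prop :=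
  (∀ a, (a, a) ∈ T) ∧ (∀ a b, (a, b) ∈ T → (b, a) ∈ T) ∧
  (∀ a b c, (a, b) ∈ T → (b, c) ∈ T → (a, c) ∈ T)

/-- The equivalence `T^e` generated by `T`. -/
def eqgen {X : Type} (T : Set (M X × M X)) : Set (M X × M X) :=
  ⋂₀ {E | IsEqv E ∧ T ⊆ E}

/-- A monomial order: a well-founded linear order compatible with the operations. -/
def IsMonomialOrder {X : Type} (lt : M X → M X → Prop) : Prop :=
  WellFounded lt ∧
  (∀ a b, a = b ∨ lt a b ∨ lt b a) ∧
  (∀ a b c, lt a b → lt b c → lt a c) ∧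
  (∀ u v w, lt u v → lt (u ++ w) (v ++ w) ∧ lt (w ++ u) (w ++ v) ∧ lt (L u) (L v))

/-- The term-rewriting system `Π_S`. -/
def PiS {X : Type} (lt : M X → M X → Prop) (S : Set (M X × M X)) : Set (M X × M X) :=
  {p | ∃ q t v, IsStar q ∧ ((t, v) ∈ S ∨ (v, t) ∈ S) ∧ lt v t ∧ p = (sub q t, sub q v)}

/-- One-step rewriting. -/
def Rew {X : Type} (lt : M X → M X → Prop) (S : Set (M X × M X)) (a b : M X) : Prop :=
  (a, b) ∈ PiS lt S

/-- Joinability under `Π_S`. -/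
def Joinable {X : Type} (lt : M X → M X → Prop) (S : Set (M X × M X)) (f g : M X) : Prop :=
  ∃ h, Relation.ReflTransGen (Rew lt S) f h ∧ Relation.ReflTransGen (Rew lt S) g h

/-- Termination of `Π_S`. -/
def Terminating {X : Type} (lt : M X → M X → Prop) (S : Set (M X × M X)) : Prop :=
  ¬ ∃ f : ℕ → M X, ∀ n, Rew lt S (f n) (f (n + 1))

/-- Confluence of `Π_S`. -/
def Confluent {X : Type} (lt : M X → M X → Prop) (S : Set (M X × M X)) : Prop :=
  ∀ f g h, Relation.ReflTransGen (Rew lt S) f g → Relation.ReflTransGen (Rew lt S) f h →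
    Joinable lt S g h

/-- Irreducible elements: `𝔐(X) \ Dom(Π_S)`. -/
def Irr {X : Type} (lt : M X → M X → Prop) (S : Set (M X × M X)) : Set (M X) :=
  {f | ∀ g, ¬ Rew lt S f g}

/-- Predecessors of `a`. -/
def Pre {X : Type} (lt : M X → M X → Prop) (S : Set (M X × M X)) (a : M X) : Set (M X) :=
  {f | Relation.ReflTransGen (Rew lt S) f a}

/-- `W` is a section of `⟨S⟩`: every congruence class meets `W` in exactly one element. -/
def IsSection {X : Type} (S : Set (M X × M X)) (W : Set (M X)) : Prop :=
  ∀ a : M X, ∃! w, w ∈ W ∧ (a, w) ∈ ocong S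

/-- Separated placements `(u₁,q₁)`, `(u₂,q₂)` in `w`. -/
def Separated {X : Type} (u₁ : M X) (q₁ : M (Option X)) (u₂ : M X) (q₂ : M (Option X))
    (w : M X) : Prop :=
  ∃ p, IsStar2 p ∧ q₁ = sub2R p u₂ ∧ q₂ = sub2L p u₁ ∧ w = sub2 p u₁ u₂

/-- Nested placements: one context is a subcontext of the other. -/
def Nested {X : Type} (q₁ q₂ : M (Option X)) : Prop :=
  ∃ q, IsStar q ∧ (q₂ = subS q₁ q ∨ q₁ = subS q₂ q)

/-- Intersecting placements `(u₁,q₁)`, `(u₂,q₂)` in `w`. -/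
def Intersecting {X : Type} (w u₁ : M X) (q₁ : M (Option X)) (u₂ : M X)
    (q₂ : M (Option X)) : Prop :=
  ∃ q a b c, IsStar q ∧ a ≠ ([] : M X) ∧ b ≠ ([] : M X) ∧ c ≠ ([] : M X) ∧
    w = sub q (a ++ b ++ c) ∧
    ((q₁ = subS q (starW ++ emb c) ∧ q₂ = subS q (emb a ++ starW)) ∨
     (q₁ = subS q (emb a ++ starW) ∧ q₂ = subS q (starW ++ emb c)))

/-- Defining relations of the free `∗`-monoid. -/
def SStar (X : Type) : Set (M X × M X) :=
  {p | (∃ w : M X, p = (L (L w), w)) ∨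
       (∃ u v : M X, u ≠ [] ∧ v ≠ [] ∧ p = (L (u ++ v), L v ++ L u)) ∨
       p = (L [], [])}

/-- Defining relations of the free group. -/
def SGrp (X : Type) : Set (M X × M X) :=
  {p | (∃ w : M X, p = (L (L w), w)) ∨
       (∃ u v : M X, u ≠ [] ∧ v ≠ [] ∧ p = (L (u ++ v), L v ++ L u)) ∨
       (∃ w : M X, p = (L w ++ w, [])) ∨
       (∃ w : M X, p = (w ++ L w, []))}

/-!
Reading a letter `x` as the generator `x` and the bracket `⌊w⌋` as the inverse of `w` gives a
monoid map `𝔐(X) → FreeGroup X` that is constant on the classes of `⟨S⟩`. A word irreducible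
for `Π_S` has only the letters `x` and `⌊x⌋` (every other bracket is the left side of a rule)
and no factor `x⌊x⌋` or `⌊x⌋x`, so it is a reduced word of the free group; hence the map is
injective on `Irr(S)`. Rewriting decreases the monomial order, so every word has a normal form,
and two normal forms of `⟨S⟩`-equivalent words have the same image, hence coincide: this gives
confluence and the section property at once.
-/

open Relation

section Substitution

variable {X : Type}

theorem bindW_append {Y Z : Type} (u v : M Y) (f : Y → M Z) :
    bindW (u ++ v) f = bindW u f ++ bindW v f := by
  induction u with
  | nil => simp [bindW]
  | cons a u ih => simp [bindW, ih]

theorem cntW_append {Y : Type} (p : Y → Bool) (u v : M Y) :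
    cntW p (u ++ v) = cntW p u + cntW p v := by
  induction u with
  | nil => simp [cntW]
  | cons a u ih => simp [cntW, ih, Nat.add_assoc]

theorem sub_append (q r : M (Option X)) (u : M X) : sub (q ++ r) u = sub q u ++ sub r u :=
  bindW_append q r _

theorem sub_starW (u : M X) : sub starW u = u := by
  simp [sub, starW, bindW, bindL]

mutual
theorem sub_bindL_some (u : M X) :
    ∀ l : Letter X, sub (bindL l fun x => [.of (some x)]) u = [l]
  | .of x => rfl
  | .br w => by
    simp only [bindL, sub, bindW, List.append_nil]
    exact congrArg (fun v => [Letter.br v]) (sub_emb w u)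
theorem sub_emb : ∀ w u : M X, sub (emb w) u = w
  | [], _ => rfl
  | l :: w, u => by
    rw [emb, bindW, sub, bindW_append, ← sub, sub_bindL_some u l, ← sub, ← emb, sub_emb w u]
    rfl
end

mutual
theorem cntW_bindL_some :
    ∀ l : Letter X, cntW (fun o => o.isNone) (bindL l fun x => [.of (some x)]) = 0
  | .of _ => rfl
  | .br w => by
    simp only [bindL, cntW, cntL, Nat.add_zero]
    exact cntW_emb w
theorem cntW_emb : ∀ w : M X, cntW (fun o => o.isNone) (emb w) = 0
  | [] => rfl
  | l :: w => by rw [emb, bindW, cntW_append, cntW_bindL_some l, ← emb, cntW_emb w]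
end

theorem isStar_emb_append_starW_append (w₁ w₂ : M X) :
    IsStar (emb w₁ ++ starW ++ emb w₂) := by
  rw [IsStar, cntW_append, cntW_append, cntW_emb, cntW_emb]
  rfl

theorem sub_emb_append_starW_append (w₁ w₂ u : M X) :
    sub (emb w₁ ++ starW ++ emb w₂) u = w₁ ++ u ++ w₂ := by
  rw [sub_append, sub_append, sub_emb, sub_emb, sub_starW]

end Substitution

section Congruence

variable {X : Type} {T : Set (M X × M X)}

mutual
theorem IsOpCong.bindL_mem {Y : Type} (hT : IsOpCong T) {f g : Y → M X}
    (hfg : ∀ y, (f y, g y) ∈ T) : ∀ l : Letter Y, (bindL l f, bindL l g) ∈ T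
  | .of y => hfg y
  | .br w => (hT.2.2.2 _ _ (hT.bindW_mem hfg w) []).2.2
theorem IsOpCong.bindW_mem {Y : Type} (hT : IsOpCong T) {f g : Y → M X}
    (hfg : ∀ y, (f y, g y) ∈ T) : ∀ w : M Y, (bindW w f, bindW w g) ∈ T
  | [] => hT.1 []
  | l :: w => hT.2.2.1 _ _ _ (hT.2.2.2 _ _ (hT.bindL_mem hfg l) _).1
      (hT.2.2.2 _ _ (hT.bindW_mem hfg w) _).2.1
end

theorem IsOpCong.sub_mem (hT : IsOpCong T) {a b : M X} (h : (a, b) ∈ T) (q : M (Option X)) :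
    (sub q a, sub q b) ∈ T :=
  hT.bindW_mem (by rintro (_ | x); exacts [h, hT.1 _]) q

theorem isOpCong_ocong (R : Set (M X × M X)) : IsOpCong (ocong R) :=
  ⟨fun a _ hT => hT.1.1 a,
   fun a b h _ hT => hT.1.2.1 a b (h _ hT),
   fun a b c h₁ h₂ _ hT => hT.1.2.2.1 a b c (h₁ _ hT) (h₂ _ hT),
   fun a b h c => ⟨fun _ hT => (hT.1.2.2.2 a b (h _ hT) c).1,
     fun _ hT => (hT.1.2.2.2 a b (h _ hT) c).2.1,
     fun _ hT => (hT.1.2.2.2 a b (h _ hT) c).2.2⟩⟩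

theorem subset_ocong (R : Set (M X × M X)) : R ⊆ ocong R :=
  fun _ hp _ hT => hT.2 hp

theorem ocong_subset {R : Set (M X × M X)} (hT : IsOpCong T) (hRT : R ⊆ T) : ocong R ⊆ T :=
  Set.sInter_subset_of_mem ⟨hT, hRT⟩

end Congruence

section MonomialOrder

variable {Y Z : Type} {p : Y → Bool} {f g : Y → M Z}

mutual
theorem bindL_congr_of_cntL_eq_zero (hfg : ∀ y, p y = false → f y = g y) :
    ∀ l : Letter Y, cntL p l = 0 → bindL l f = bindL l g
  | .of y, h => hfg y (by simpa [cntL] using h)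
  | .br w, h => by rw [bindL, bindL, bindW_congr_of_cntW_eq_zero hfg w h]
theorem bindW_congr_of_cntW_eq_zero (hfg : ∀ y, p y = false → f y = g y) :
    ∀ w : M Y, cntW p w = 0 → bindW w f = bindW w g
  | [], _ => rfl
  | l :: w, h => by
    rw [cntW, Nat.add_eq_zero_iff] at h
    rw [bindW, bindW, bindL_congr_of_cntL_eq_zero hfg l h.1,
      bindW_congr_of_cntW_eq_zero hfg w h.2]
end

variable {lt : M Z → M Z → Prop}

mutual
theorem IsMonomialOrder.lt_bindL (hlt : IsMonomialOrder lt)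
    (hfg : ∀ y, p y = false → f y = g y) (hfg' : ∀ y, p y = true → lt (f y) (g y)) :
    ∀ l : Letter Y, cntL p l = 1 → lt (bindL l f) (bindL l g)
  | .of y, h => hfg' y (by simpa [cntL] using h)
  | .br w, h => (hlt.2.2.2 _ _ [] (hlt.lt_bindW hfg hfg' w h)).2.2
theorem IsMonomialOrder.lt_bindW (hlt : IsMonomialOrder lt)
    (hfg : ∀ y, p y = false → f y = g y) (hfg' : ∀ y, p y = true → lt (f y) (g y)) :
    ∀ w : M Y, cntW p w = 1 → lt (bindW w f) (bindW w g)
  | [], h => absurd h (by simp [cntW])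
  | l :: w, h => by
    rw [cntW] at h
    rw [bindW, bindW]
    rcases Nat.add_eq_one_iff.mp h with ⟨hl, hw⟩ | ⟨hl, hw⟩
    · rw [bindL_congr_of_cntL_eq_zero hfg l hl]
      exact (hlt.2.2.2 _ _ _ (hlt.lt_bindW hfg hfg' w hw)).2.1
    · rw [bindW_congr_of_cntW_eq_zero hfg w hw]
      exact (hlt.2.2.2 _ _ _ (hlt.lt_bindL hfg hfg' l hl)).1
end

theorem IsMonomialOrder.lt_sub {X : Type} {lt : M X → M X → Prop} (hlt : IsMonomialOrder lt)
    {q : M (Option X)} (hq : IsStar q) {u v : M X} (huv : lt u v) : lt (sub q u) (sub q v) :=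
  hlt.lt_bindW (p := Option.isNone) (by rintro (_ | x) h; exacts [absurd h (by simp), rfl])
    (by rintro (_ | x) h; exacts [huv, absurd h (by simp)]) q hq

end MonomialOrder

section Rewriting

variable {X : Type} {lt : M X → M X → Prop} {S : Set (M X × M X)} {a b : M X}

theorem Rew.mem_ocong (h : Rew lt S a b) : (a, b) ∈ ocong S := by
  obtain ⟨q, t, v, -, htv | hvt, -, hab⟩ := h <;> obtain ⟨rfl, rfl⟩ := Prod.mk.inj hab
  · exact (isOpCong_ocong S).sub_mem (subset_ocong S htv) q
  · exact (isOpCong_ocong S).2.1 _ _ ((isOpCong_ocong S).sub_mem (subset_ocong S hvt) q)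

theorem reflTransGen_rew_mem_ocong (h : ReflTransGen (Rew lt S) a b) : (a, b) ∈ ocong S := by
  induction h with
  | refl => exact (isOpCong_ocong S).1 a
  | tail _ hbc ih => exact (isOpCong_ocong S).2.2.1 _ _ _ ih hbc.mem_ocong

theorem IsMonomialOrder.lt_of_rew (hlt : IsMonomialOrder lt) (h : Rew lt S a b) : lt b a := by
  obtain ⟨q, t, v, hq, -, hvt, hab⟩ := h
  obtain ⟨rfl, rfl⟩ := Prod.mk.inj hab
  exact hlt.lt_sub hq hvt

theorem IsMonomialOrder.terminating (hlt : IsMonomialOrder lt) : Terminating lt S := by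
  rintro ⟨f, hf⟩
  obtain ⟨n, hn⟩ := @WellFounded.not_rel_apply_succ _ _ ⟨hlt.1⟩ f
  exact hn (hlt.lt_of_rew (hf n))

theorem IsMonomialOrder.exists_mem_irr_reflTransGen (hlt : IsMonomialOrder lt) (a : M X) :
    ∃ w ∈ Irr lt S, ReflTransGen (Rew lt S) a w := by
  induction a using hlt.1.induction with
  | _ a ih =>
    by_cases h : ∃ b, Rew lt S a b
    · obtain ⟨b, hab⟩ := h
      obtain ⟨w, hw, hbw⟩ := ih b (hlt.lt_of_rew hab)
      exact ⟨w, hw, ReflTransGen.head hab hbw⟩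
    · exact ⟨a, fun b hab => h ⟨b, hab⟩, ReflTransGen.refl⟩

theorem confluent_and_isSection_of_injOn {β : Type*} (hlt : IsMonomialOrder lt) (φ : M X → β)
    (hφ : ∀ ⦃a b⦄, (a, b) ∈ ocong S → φ a = φ b) (hinj : Set.InjOn φ (Irr lt S)) :
    Confluent lt S ∧ IsSection S (Irr lt S) := by
  have hφ' : ∀ ⦃a b⦄, ReflTransGen (Rew lt S) a b → φ a = φ b :=
    fun _ _ h => hφ (reflTransGen_rew_mem_ocong h)
  refine ⟨fun f g h hfg hfh => ?_, fun a => ?_⟩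
  · obtain ⟨g', hg', hgg'⟩ := hlt.exists_mem_irr_reflTransGen g
    obtain ⟨h', hh', hhh'⟩ := hlt.exists_mem_irr_reflTransGen h
    have : g' = h' := hinj hg' hh' ((hφ' (hfg.trans hgg')).symm.trans (hφ' (hfh.trans hhh')))
    exact ⟨g', hgg', this ▸ hhh'⟩
  · obtain ⟨w, hw, haw⟩ := hlt.exists_mem_irr_reflTransGen a
    exact ⟨w, ⟨hw, reflTransGen_rew_mem_ocong haw⟩,
      fun w' ⟨hw', haw'⟩ => hinj hw' hw ((hφ haw').symm.trans (hφ' haw))⟩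

theorem rew_append_append {t v : M X} (htv : (t, v) ∈ S) (hvt : lt v t) (w₁ w₂ : M X) :
    Rew lt S (w₁ ++ t ++ w₂) (w₁ ++ v ++ w₂) :=
  ⟨emb w₁ ++ starW ++ emb w₂, t, v, isStar_emb_append_starW_append w₁ w₂, .inl htv, hvt,
    by rw [sub_emb_append_starW_append, sub_emb_append_starW_append]⟩

theorem not_infix_of_mem_irr {w t v : M X} (hw : w ∈ Irr lt S) (htv : (t, v) ∈ S)
    (hvt : lt v t) : ¬ t <:+: w := by
  rintro ⟨w₁, w₂, rfl⟩
  exact hw _ (rew_append_append htv hvt w₁ w₂)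

end Rewriting

section FreeGroup

variable {X : Type}

mutual
def Letter.toFreeGroup : Letter X → FreeGroup X
  | .of x => .of x
  | .br w => (toFreeGroup w)⁻¹
def toFreeGroup : M X → FreeGroup X
  | [] => 1
  | l :: w => l.toFreeGroup * toFreeGroup w
end

theorem toFreeGroup_append (u v : M X) : toFreeGroup (u ++ v) = toFreeGroup u * toFreeGroup v := by
  induction u with
  | nil => simp [toFreeGroup]
  | cons l u ih => simp [toFreeGroup, ih, mul_assoc]

theorem toFreeGroup_L (w : M X) : toFreeGroup (L w) = (toFreeGroup w)⁻¹ := by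
  simp [L, toFreeGroup, Letter.toFreeGroup]

theorem isOpCong_ker_toFreeGroup : IsOpCong {p : M X × M X | toFreeGroup p.1 = toFreeGroup p.2} :=
  ⟨fun _ => rfl, fun _ _ => Eq.symm, fun _ _ _ => Eq.trans, fun a b (h : _ = _) c => by
    simp only [Set.mem_ofPred_eq, toFreeGroup_append, toFreeGroup_L, h, and_self]⟩

theorem sGrp_subset_ker_toFreeGroup :
    SGrp X ⊆ {p : M X × M X | toFreeGroup p.1 = toFreeGroup p.2} := by
  rintro _ (⟨w, rfl⟩ | ⟨u, v, -, -, rfl⟩ | ⟨w, rfl⟩ | ⟨w, rfl⟩) <;>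
    simp [toFreeGroup_append, toFreeGroup_L, toFreeGroup]

theorem toFreeGroup_eq_of_mem_ocong {a b : M X} (h : (a, b) ∈ ocong (SGrp X)) :
    toFreeGroup a = toFreeGroup b :=
  ocong_subset isOpCong_ker_toFreeGroup sGrp_subset_ker_toFreeGroup h

def Letter.ofSigned : X × Bool → Letter X
  | (x, true) => .of x
  | (x, false) => .br [.of x]

theorem toFreeGroup_map_ofSigned (ws : List (X × Bool)) :
    toFreeGroup (ws.map Letter.ofSigned) = FreeGroup.mk ws := by
  induction ws with
  | nil => rfl
  | cons a ws ih =>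
    obtain ⟨x, _ | _⟩ := a <;>
      simp [toFreeGroup, Letter.toFreeGroup, Letter.ofSigned, ih, FreeGroup.of, FreeGroup.inv_mk,
        FreeGroup.invRev, FreeGroup.mul_mk]

variable {lt : M X → M X → Prop} {w : M X}

theorem mem_range_ofSigned_of_mem_irr (hor : ∀ p ∈ SGrp X, lt p.2 p.1)
    (hw : w ∈ Irr lt (SGrp X)) {l : Letter X} (hl : l ∈ w) :
    l ∈ Set.range Letter.ofSigned := by
  have no_rule : ∀ v, ([l], v) ∉ SGrp X := fun v h =>
    not_infix_of_mem_irr hw h (hor _ h) ((List.singleton_infix_iff l w).mpr hl)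
  rcases l with x | (_ | ⟨a, _ | ⟨b, u⟩⟩)
  · exact ⟨(x, true), rfl⟩
  · exact (no_rule [] (.inr (.inr (.inl ⟨[], rfl⟩)))).elim
  · rcases a with x | u
    · exact ⟨(x, false), rfl⟩
    · exact (no_rule u (.inl ⟨u, rfl⟩)).elim
  · exact (no_rule _ (.inr (.inl ⟨[a], b :: u, by simp, by simp, rfl⟩))).elim

theorem exists_isReduced_map_ofSigned_of_mem_irr (hor : ∀ p ∈ SGrp X, lt p.2 p.1)
    (hw : w ∈ Irr lt (SGrp X)) :
    ∃ ws : List (X × Bool), FreeGroup.IsReduced ws ∧ ws.map Letter.ofSigned = w := by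
  obtain ⟨ws, rfl⟩ : w ∈ Set.range (List.map Letter.ofSigned) := by
    rw [Set.range_list_map]
    exact fun l hl => mem_range_ofSigned_of_mem_irr hor hw hl
  refine ⟨ws, FreeGroup.IsReduced.of_forall_not_step ?_, rfl⟩
  rintro _ (@⟨ws₁, ws₂, x, b⟩)
  have hinf : [Letter.ofSigned (x, b), Letter.ofSigned (x, !b)] <:+:
      (ws₁ ++ (x, b) :: (x, !b) :: ws₂).map Letter.ofSigned :=
    ⟨ws₁.map Letter.ofSigned, ws₂.map Letter.ofSigned, by simp⟩
  have hS : ([Letter.ofSigned (x, b), Letter.ofSigned (x, !b)], []) ∈ SGrp X := by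
    cases b
    exacts [.inr (.inr (.inl ⟨[.of x], rfl⟩)), .inr (.inr (.inr ⟨[.of x], rfl⟩))]
  exact not_infix_of_mem_irr hw hS (hor _ hS) hinf

theorem injOn_toFreeGroup_irr (hor : ∀ p ∈ SGrp X, lt p.2 p.1) :
    Set.InjOn toFreeGroup (Irr lt (SGrp X)) := by
  classical
  rintro _ hw₁ _ hw₂ h
  obtain ⟨ws₁, hws₁, rfl⟩ := exists_isReduced_map_ofSigned_of_mem_irr hor hw₁
  obtain ⟨ws₂, hws₂, rfl⟩ := exists_isReduced_map_ofSigned_of_mem_irr hor hw₂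
  rw [toFreeGroup_map_ofSigned, toFreeGroup_map_ofSigned] at h
  rw [← hws₁.reduce_eq, ← hws₂.reduce_eq, ← FreeGroup.toWord_mk,
    ← FreeGroup.toWord_mk, h]

end FreeGroup

/-- `Π_S` for the group relations is convergent and `Irr(S)` is a
section of the free group `𝔐(X)/⟨S⟩`. -/
theorem sgrp_convergent_section (X : Type) (lt : M X → M X → Prop)
    (hlt : IsMonomialOrder lt) (hor : ∀ p ∈ SGrp X, lt p.2 p.1) :
    (Terminating lt (SGrp X) ∧ Confluent lt (SGrp X)) ∧
    IsSection (SGrp X) (Irr lt (SGrp X)) := by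
  obtain ⟨hconf, hsec⟩ := confluent_and_isSection_of_injOn hlt toFreeGroup
    (fun _ _ => toFreeGroup_eq_of_mem_ocong) (injOn_toFreeGroup_irr hor)
  exact ⟨⟨hlt.terminating, hconf⟩, hsec⟩

end OpMon
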